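/- Let f : ℝ → ℝ be twice continuously differentiable, g : ℝ → ℝ continuously differentiable, L > 0, T > 0 and M > 0. Then there exists a constant C > 0, depending only on f, g, L and M, such that for any two classical L-periodic solutions u and v of u_t + f(u)_x − u_xx + u_xxx = g(u) on [0,T] satisfying |u(t,x)| ≤ M, |v(t,x)| ≤ M, |∂_x u(t,x)| ≤ M and |∂_x v(t,x)| ≤ M for all (t,x) ∈ [0,T]×ℝ, one has the continuous-dependence (Gronwall) estimate ∫₀^L (u(t,x) − v(t,x))² dx ≤ e^{C·t} · ∫₀^L (u(0,x) − v(0,x))² dx for all t ∈ [0,T]. -/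

import Mathlib

/-!
Energy method for the difference `w = u - v`, which satisfies
`w_t = (g(u) - g(v)) - (f'(u) u_x - f'(v) v_x) + w_xx - w_xxx`.
Multiply by `2w` and integrate over a period: by periodicity `∫ w (w_xx - w_xxx) = -∫ w_x²`.
On `[-M, M]` the functions `g` and `f'` are Lipschitz and `f'` is bounded, so with `|v_x| ≤ M`
Young's inequality bounds the source and transport terms by `C ∫ w² + ∫ w_x²`.
Thus `E(t) = ∫₀^L w²` satisfies `E' ≤ C E` on `(0, T)`; as `E` is continuous on `[0, T]`,
`e^{-Ct} E(t)` is nonincreasing there.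
-/

open Set Topology Function NNReal

/-- A classical `L`-periodic solution of `u_t + f(u)_x − u_xx + u_xxx = g(u)` on `[0,T]`:
`u` is continuous on `[0,T] × ℝ`, `L`-periodic in space, its partial derivatives
`∂ₜu, ∂ₓu, ∂ₓ²u, ∂ₓ³u` exist and are continuous on `(0,T] × ℝ`, and the equation holds
pointwise on `(0,T] × ℝ`. -/
def IsClassicalPeriodicSolutionOn (f g : ℝ → ℝ) (L T : ℝ) (u : ℝ → ℝ → ℝ) : Prop :=
  ContinuousOn (fun p : ℝ × ℝ => u p.1 p.2) (Set.Icc (0:ℝ) T ×ˢ (Set.univ : Set ℝ)) ∧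
  (∀ t ∈ Set.Icc (0:ℝ) T, ∀ x : ℝ, u t (x + L) = u t x) ∧
  (∀ t ∈ Set.Ioc (0:ℝ) T, ∀ x : ℝ,
    DifferentiableAt ℝ (fun s => u s x) t ∧
    DifferentiableAt ℝ (u t) x ∧
    DifferentiableAt ℝ (deriv (u t)) x ∧
    DifferentiableAt ℝ (deriv (deriv (u t))) x) ∧
  ContinuousOn (fun p : ℝ × ℝ => deriv (fun s => u s p.2) p.1)
    (Set.Ioc (0:ℝ) T ×ˢ (Set.univ : Set ℝ)) ∧
  ContinuousOn (fun p : ℝ × ℝ => deriv (u p.1) p.2)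
    (Set.Ioc (0:ℝ) T ×ˢ (Set.univ : Set ℝ)) ∧
  ContinuousOn (fun p : ℝ × ℝ => deriv (deriv (u p.1)) p.2)
    (Set.Ioc (0:ℝ) T ×ˢ (Set.univ : Set ℝ)) ∧
  ContinuousOn (fun p : ℝ × ℝ => deriv (deriv (deriv (u p.1))) p.2)
    (Set.Ioc (0:ℝ) T ×ˢ (Set.univ : Set ℝ)) ∧
  (∀ t ∈ Set.Ioc (0:ℝ) T, ∀ x : ℝ,
    deriv (fun s => u s x) t + deriv f (u t x) * deriv (u t) x -
      deriv (deriv (u t)) x + deriv (deriv (deriv (u t))) x = g (u t x))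

theorem Function.Periodic.deriv {F : ℝ → ℝ} {c : ℝ} (h : Periodic F c) : Periodic (deriv F) c :=
  fun x => by rw [← deriv_comp_add_const, h.funext]

theorem ContinuousOn.continuous_of_uncurry_prod_univ {X Y Z : Type*} [TopologicalSpace X]
    [TopologicalSpace Y] [TopologicalSpace Z] {F : X → Y → Z} {s : Set X}
    (hF : ContinuousOn (uncurry F) (s ×ˢ univ)) {x : X} (hx : x ∈ s) : Continuous (F x) :=
  continuousOn_univ.1 (hF.uncurry_left x hx)

section ParametricIntegral

variable {E : Type*} [NormedAddCommGroup E] [NormedSpace ℝ E]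

theorem continuousOn_intervalIntegral_of_continuousOn_uncurry {X : Type*} [TopologicalSpace X]
    {F : X → ℝ → E} {s : Set X} (hF : ContinuousOn (uncurry F) (s ×ˢ univ)) (a b : ℝ) :
    ContinuousOn (fun t => ∫ x in a..b, F t x) s := by
  rw [continuousOn_iff_continuous_domRestrict]
  refine intervalIntegral.continuous_parametric_intervalIntegral_of_continuous'
    (f := fun (t : s) x => F t x) ?_ a b
  exact hF.comp_continuous (continuous_subtype_val.prodMap continuous_id)
    fun p => ⟨p.1.2, trivial⟩

theorem hasDerivAt_intervalIntegral_of_continuousOn_uncurry {F F' : ℝ → ℝ → E} {s : Set ℝ}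
    {t₀ : ℝ} (hs : s ∈ 𝓝 t₀) (hF : ContinuousOn (uncurry F) (s ×ˢ univ))
    (hF' : ContinuousOn (uncurry F') (s ×ˢ univ))
    (hderiv : ∀ t ∈ s, ∀ x, HasDerivAt (F · x) (F' t x) t) (a b : ℝ) :
    HasDerivAt (fun t => ∫ x in a..b, F t x) (∫ x in a..b, F' t₀ x) t₀ := by
  obtain ⟨ε, hε, hεs⟩ := Metric.nhds_basis_closedBall.mem_iff.1 hs
  obtain ⟨B, hB⟩ := (isCompact_closedBall t₀ ε).prod isCompact_uIcc
    |>.exists_bound_of_continuousOn (hF'.mono (prod_mono hεs (subset_univ (uIcc a b))))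
  have ht₀ : t₀ ∈ s := mem_of_mem_nhds hs
  refine (intervalIntegral.hasDerivAt_integral_of_dominated_loc_of_deriv_le (bound := fun _ => B)
    (Metric.closedBall_mem_nhds t₀ hε) ?_ ?_ ?_ ?_ intervalIntegrable_const ?_).2
  · filter_upwards [hs] with t ht
    exact (hF.continuous_of_uncurry_prod_univ ht).aestronglyMeasurable
  · exact (hF.continuous_of_uncurry_prod_univ ht₀).intervalIntegrable a b
  · exact (hF'.continuous_of_uncurry_prod_univ ht₀).aestronglyMeasurable
  · exact MeasureTheory.ae_of_all _ fun x hx t ht => hB (t, x) ⟨ht, uIoc_subset_uIcc hx⟩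
  · exact MeasureTheory.ae_of_all _ fun x _ t ht => hderiv t (hεs ht) x

end ParametricIntegral

theorem le_exp_mul_sub_mul_of_hasDerivAt_le {E E' : ℝ → ℝ} {C a b : ℝ}
    (hc : ContinuousOn E (Icc a b)) (hd : ∀ t ∈ Ioo a b, HasDerivAt E (E' t) t)
    (hle : ∀ t ∈ Ioo a b, E' t ≤ C * E t) {t : ℝ} (ht : t ∈ Icc a b) :
    E t ≤ Real.exp (C * (t - a)) * E a := by
  set φ : ℝ → ℝ := fun t => Real.exp (-(C * (t - a))) * E t
  have hφ : AntitoneOn φ (Icc a b) := by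
    refine antitoneOn_of_hasDerivWithinAt_nonpos (convex_Icc a b) (by fun_prop)
      (f' := fun t => Real.exp (-(C * (t - a))) * (E' t - C * E t)) (fun t ht => ?_)
      (fun t ht => ?_)
    · rw [interior_Icc] at ht ⊢
      have hexp : HasDerivAt (fun t => Real.exp (-(C * (t - a))))
          (Real.exp (-(C * (t - a))) * -C) t := by
        simpa using ((((hasDerivAt_id t).sub_const a).const_mul C).neg).exp
      exact ((hexp.mul (hd t ht)).congr_deriv (by ring)).hasDerivWithinAt
    · rw [interior_Icc] at ht
      exact mul_nonpos_of_nonneg_of_nonpos (Real.exp_pos _).le (sub_nonpos.2 (hle t ht))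
  have key : φ t ≤ φ a := hφ (left_mem_Icc.2 (ht.1.trans ht.2)) ht ht.1
  simp only [φ, sub_self, mul_zero, neg_zero, Real.exp_zero, one_mul] at key
  calc E t = Real.exp (C * (t - a)) * (Real.exp (-(C * (t - a))) * E t) := by
        rw [← mul_assoc, ← Real.exp_add, add_neg_cancel, Real.exp_zero, one_mul]
    _ ≤ Real.exp (C * (t - a)) * E a := by gcongr

theorem integral_sq_add_mul_sub_eq_zero_of_periodic {W W₁ W₂ W₃ : ℝ → ℝ} {L : ℝ}
    (hW : Periodic W L) (h₀ : ∀ x, HasDerivAt W (W₁ x) x) (h₁ : ∀ x, HasDerivAt W₁ (W₂ x) x)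
    (h₂ : ∀ x, HasDerivAt W₂ (W₃ x) x) (hW₃ : Continuous W₃) :
    ∫ x in (0:ℝ)..L, (W₁ x ^ 2 + W x * (W₂ x - W₃ x)) = 0 := by
  have hW₁ : Periodic W₁ L := by
    have : W₁ = deriv W := funext fun x => (h₀ x).deriv.symm
    exact this ▸ hW.deriv
  have hW₂ : Periodic W₂ L := by
    have : W₂ = deriv W₁ := funext fun x => (h₁ x).deriv.symm
    exact this ▸ hW₁.deriv
  have hWc : Continuous W := continuous_iff_continuousAt.2 fun x => (h₀ x).continuousAt
  have hW₁c : Continuous W₁ := continuous_iff_continuousAt.2 fun x => (h₁ x).continuousAt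
  have hW₂c : Continuous W₂ := continuous_iff_continuousAt.2 fun x => (h₂ x).continuousAt
  let Ψ : ℝ → ℝ := fun x => W x * W₁ x - W x * W₂ x + W₁ x ^ 2 / 2
  have hΨ : ∀ x, HasDerivAt Ψ (W₁ x ^ 2 + W x * (W₂ x - W₃ x)) x := fun x => by
    refine ((((h₀ x).mul (h₁ x)).sub ((h₀ x).mul (h₂ x))).add
      (((h₁ x).pow 2).div_const 2)).congr_deriv ?_
    push_cast
    ring
  rw [intervalIntegral.integral_eq_sub_of_hasDerivAt (fun x _ => hΨ x)
    ((by fun_prop : Continuous _).intervalIntegrable _ _), sub_eq_zero]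
  have at_period : ∀ F : ℝ → ℝ, Periodic F L → F L = F 0 := fun F hF => by
    simpa only [zero_add] using hF 0
  simp only [Ψ, at_period W hW, at_period W₁ hW₁, at_period W₂ hW₂]

theorem two_mul_sub_mul_sub_sub_le_of_lipschitzOnWith {a g : ℝ → ℝ} {s : Set ℝ} {K₁ M C : ℝ}
    {K₂ K₃ : ℝ≥0} (hg : LipschitzOnWith K₃ g s) (ha : LipschitzOnWith K₂ a s)
    (ha_le : ∀ y ∈ s, |a y| ≤ K₁) (hC : K₁ ^ 2 + 2 * K₂ * M + 2 * K₃ ≤ C) {A B A₁ B₁ : ℝ}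
    (hA : A ∈ s) (hB : B ∈ s) (hB₁ : |B₁| ≤ M) :
    2 * (A - B) * (g A - g B - (a A * A₁ - a B * B₁)) ≤ C * (A - B) ^ 2 + (A₁ - B₁) ^ 2 := by
  have hgAB : |g A - g B| ≤ K₃ * |A - B| := by
    simpa only [Real.dist_eq] using hg.dist_le_mul A hA B hB
  have haAB : |a A - a B| ≤ K₂ * |A - B| := by
    simpa only [Real.dist_eq] using ha.dist_le_mul A hA B hB
  have source : (A - B) * (g A - g B) ≤ K₃ * (A - B) ^ 2 :=
    calc _ ≤ |A - B| * |g A - g B| := by rw [← abs_mul]; exact le_abs_self _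
      _ ≤ |A - B| * (K₃ * |A - B|) := by gcongr
      _ = K₃ * (A - B) ^ 2 := by rw [← sq_abs (A - B)]; ring
  have transport : -(2 * (A - B) * (a A * (A₁ - B₁))) ≤ K₁ ^ 2 * (A - B) ^ 2 + (A₁ - B₁) ^ 2 :=
    calc _ ≤ 2 * (|a A| * |A - B|) * |A₁ - B₁| := by
          refine (neg_le_abs _).trans (le_of_eq ?_)
          rw [abs_mul, abs_mul, abs_mul, abs_two]; ring
      _ ≤ 2 * (K₁ * |A - B|) * |A₁ - B₁| := by gcongr; exact ha_le A hA
      _ ≤ (K₁ * |A - B|) ^ 2 + |A₁ - B₁| ^ 2 := two_mul_le_add_sq _ _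
      _ = K₁ ^ 2 * (A - B) ^ 2 + (A₁ - B₁) ^ 2 := by rw [mul_pow, sq_abs, sq_abs]
  have coefficient : -((A - B) * ((a A - a B) * B₁)) ≤ K₂ * M * (A - B) ^ 2 :=
    calc _ ≤ |A - B| * (|a A - a B| * |B₁|) := by
          rw [← abs_mul, ← abs_mul]; exact neg_le_abs _
      _ ≤ |A - B| * (K₂ * |A - B| * M) := by gcongr
      _ = K₂ * M * (A - B) ^ 2 := by rw [← sq_abs (A - B)]; ring
  linarith [mul_le_mul_of_nonneg_right hC (sq_nonneg (A - B))]

namespace IsClassicalPeriodicSolutionOn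

variable {f g : ℝ → ℝ} {L T t : ℝ} {u v : ℝ → ℝ → ℝ}

theorem continuous_slice (hu : IsClassicalPeriodicSolutionOn f g L T u) (ht : t ∈ Icc 0 T) :
    Continuous (u t) :=
  hu.1.continuous_of_uncurry_prod_univ (F := u) ht

theorem periodic_slice (hu : IsClassicalPeriodicSolutionOn f g L T u) (ht : t ∈ Icc 0 T) :
    Periodic (u t) L :=
  hu.2.1 t ht

theorem hasDerivAt_time (hu : IsClassicalPeriodicSolutionOn f g L T u) (ht : t ∈ Ioc 0 T)
    (x : ℝ) : HasDerivAt (fun s => u s x) (deriv (fun s => u s x) t) t :=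
  (hu.2.2.1 t ht x).1.hasDerivAt

theorem hasDerivAt_slice (hu : IsClassicalPeriodicSolutionOn f g L T u) (ht : t ∈ Ioc 0 T)
    (x : ℝ) : HasDerivAt (u t) (deriv (u t) x) x :=
  (hu.2.2.1 t ht x).2.1.hasDerivAt

theorem hasDerivAt_deriv_slice (hu : IsClassicalPeriodicSolutionOn f g L T u)
    (ht : t ∈ Ioc 0 T) (x : ℝ) : HasDerivAt (deriv (u t)) (deriv (deriv (u t)) x) x :=
  (hu.2.2.1 t ht x).2.2.1.hasDerivAt

theorem hasDerivAt_deriv_deriv_slice (hu : IsClassicalPeriodicSolutionOn f g L T u)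
    (ht : t ∈ Ioc 0 T) (x : ℝ) :
    HasDerivAt (deriv (deriv (u t))) (deriv (deriv (deriv (u t))) x) x :=
  (hu.2.2.1 t ht x).2.2.2.hasDerivAt

theorem continuous_deriv_time (hu : IsClassicalPeriodicSolutionOn f g L T u)
    (ht : t ∈ Ioc 0 T) : Continuous fun x => deriv (fun s => u s x) t :=
  hu.2.2.2.1.continuous_of_uncurry_prod_univ (F := fun t x => deriv (fun s => u s x) t) ht

theorem continuous_deriv_slice (hu : IsClassicalPeriodicSolutionOn f g L T u)
    (ht : t ∈ Ioc 0 T) : Continuous (deriv (u t)) :=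
  hu.2.2.2.2.1.continuous_of_uncurry_prod_univ (F := fun t => deriv (u t)) ht

theorem continuous_deriv_deriv_slice (hu : IsClassicalPeriodicSolutionOn f g L T u)
    (ht : t ∈ Ioc 0 T) : Continuous (deriv (deriv (u t))) :=
  hu.2.2.2.2.2.1.continuous_of_uncurry_prod_univ (F := fun t => deriv (deriv (u t))) ht

theorem continuous_deriv_deriv_deriv_slice (hu : IsClassicalPeriodicSolutionOn f g L T u)
    (ht : t ∈ Ioc 0 T) : Continuous (deriv (deriv (deriv (u t)))) :=
  hu.2.2.2.2.2.2.1.continuous_of_uncurry_prod_univ (F := fun t => deriv (deriv (deriv (u t)))) ht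

theorem deriv_time_eq (hu : IsClassicalPeriodicSolutionOn f g L T u) (ht : t ∈ Ioc 0 T)
    (x : ℝ) : deriv (fun s => u s x) t = g (u t x) - deriv f (u t x) * deriv (u t) x
      + deriv (deriv (u t)) x - deriv (deriv (deriv (u t))) x := by
  linarith [hu.2.2.2.2.2.2.2 t ht x]

theorem continuousOn_integral_sq_sub (hu : IsClassicalPeriodicSolutionOn f g L T u)
    (hv : IsClassicalPeriodicSolutionOn f g L T v) :
    ContinuousOn (fun t => ∫ x in (0:ℝ)..L, (u t x - v t x) ^ 2) (Icc 0 T) := by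
  have h : ContinuousOn (uncurry fun t x => (u t x - v t x) ^ 2) (Icc 0 T ×ˢ univ) :=
    (hu.1.sub hv.1).pow 2
  exact continuousOn_intervalIntegral_of_continuousOn_uncurry h 0 L

theorem hasDerivAt_integral_sq_sub (hu : IsClassicalPeriodicSolutionOn f g L T u)
    (hv : IsClassicalPeriodicSolutionOn f g L T v) (ht : t ∈ Ioo 0 T) :
    HasDerivAt (fun t => ∫ x in (0:ℝ)..L, (u t x - v t x) ^ 2)
      (∫ x in (0:ℝ)..L, 2 * (u t x - v t x) * (deriv (fun s => u s x) t -
        deriv (fun s => v s x) t)) t := by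
  have hF : ContinuousOn (uncurry fun t x => (u t x - v t x) ^ 2) (Ioo 0 T ×ˢ univ) :=
    ((hu.1.sub hv.1).pow 2).mono (prod_mono Ioo_subset_Icc_self le_rfl)
  have hF' : ContinuousOn (uncurry fun t x => 2 * (u t x - v t x) *
      (deriv (fun s => u s x) t - deriv (fun s => v s x) t)) (Ioo 0 T ×ˢ univ) :=
    ((continuousOn_const.mul (hu.1.sub hv.1)).mono (prod_mono Ioo_subset_Icc_self le_rfl)).mul
      ((hu.2.2.2.1.sub hv.2.2.2.1).mono (prod_mono Ioo_subset_Ioc_self le_rfl))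
  refine hasDerivAt_intervalIntegral_of_continuousOn_uncurry (Ioo_mem_nhds ht.1 ht.2) hF hF'
    (fun s hs x => ?_) 0 L
  have hs' : s ∈ Ioc 0 T := Ioo_subset_Ioc_self hs
  refine (((hu.hasDerivAt_time hs' x).sub (hv.hasDerivAt_time hs' x)).pow 2).congr_deriv ?_
  simp only [Pi.sub_apply]
  ring

theorem integral_two_mul_sub_mul_deriv_time_sub_le (hu : IsClassicalPeriodicSolutionOn f g L T u)
    (hv : IsClassicalPeriodicSolutionOn f g L T v) (hL : 0 ≤ L) {s : Set ℝ} {K₁ M C : ℝ}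
    {K₂ K₃ : ℝ≥0} (hg : LipschitzOnWith K₃ g s) (hf : LipschitzOnWith K₂ (deriv f) s)
    (hf_le : ∀ y ∈ s, |deriv f y| ≤ K₁) (hC : K₁ ^ 2 + 2 * K₂ * M + 2 * K₃ ≤ C)
    (hus : ∀ x, u t x ∈ s) (hvs : ∀ x, v t x ∈ s) (hvx : ∀ x, |deriv (v t) x| ≤ M)
    (ht : t ∈ Ioc 0 T) :
    ∫ x in (0:ℝ)..L, 2 * (u t x - v t x) * (deriv (fun s => u s x) t - deriv (fun s => v s x) t)
      ≤ C * ∫ x in (0:ℝ)..L, (u t x - v t x) ^ 2 := by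
  have ht' : t ∈ Icc 0 T := Ioc_subset_Icc_self ht
  have dissipation := integral_sq_add_mul_sub_eq_zero_of_periodic (W := fun x => u t x - v t x)
    ((hu.periodic_slice ht').sub (hv.periodic_slice ht'))
    (fun x => (hu.hasDerivAt_slice ht x).sub (hv.hasDerivAt_slice ht x))
    (fun x => (hu.hasDerivAt_deriv_slice ht x).sub (hv.hasDerivAt_deriv_slice ht x))
    (fun x => (hu.hasDerivAt_deriv_deriv_slice ht x).sub (hv.hasDerivAt_deriv_deriv_slice ht x))
    ((hu.continuous_deriv_deriv_deriv_slice ht).sub (hv.continuous_deriv_deriv_deriv_slice ht))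
  have pointwise : ∀ x ∈ Icc 0 L,
      2 * (u t x - v t x) * (deriv (fun s => u s x) t - deriv (fun s => v s x) t) ≤
        C * (u t x - v t x) ^ 2 + 2 * ((deriv (u t) x - deriv (v t) x) ^ 2 +
          (u t x - v t x) * ((deriv (deriv (u t)) x - deriv (deriv (v t)) x) -
            (deriv (deriv (deriv (u t))) x - deriv (deriv (deriv (v t))) x))) := fun x _ => by
    rw [hu.deriv_time_eq ht, hv.deriv_time_eq ht]
    linarith [two_mul_sub_mul_sub_sub_le_of_lipschitzOnWith hg hf hf_le hC (hus x) (hvs x)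
      (hvx x) (A₁ := deriv (u t) x), sq_nonneg (deriv (u t) x - deriv (v t) x)]
  have := hu.continuous_slice ht'
  have := hv.continuous_slice ht'
  have := hu.continuous_deriv_time ht
  have := hv.continuous_deriv_time ht
  have := hu.continuous_deriv_slice ht
  have := hv.continuous_deriv_slice ht
  have := hu.continuous_deriv_deriv_slice ht
  have := hv.continuous_deriv_deriv_slice ht
  have := hu.continuous_deriv_deriv_deriv_slice ht
  have := hv.continuous_deriv_deriv_deriv_slice ht
  calc _ ≤ _ := intervalIntegral.integral_mono_on hL
        ((by fun_prop : Continuous _).intervalIntegrable _ _)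
        ((by fun_prop : Continuous _).intervalIntegrable _ _) pointwise
    _ = C * ∫ x in (0:ℝ)..L, (u t x - v t x) ^ 2 := by
      rw [intervalIntegral.integral_add, intervalIntegral.integral_const_mul,
        intervalIntegral.integral_const_mul, dissipation, mul_zero, add_zero]
      all_goals exact (by fun_prop : Continuous _).intervalIntegrable _ _

end IsClassicalPeriodicSolutionOn

/-- **Continuous dependence (Gronwall) estimate** for the generalized KdV–Burgers
equation with a source: there is a constant `C > 0`, depending only on `f`, `g`, `L`
and `M`, such that any two classical `L`-periodic solutions on `[0,T]` with values and
first spatial derivatives bounded by `M` satisfy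
`∫₀^L (u(t) − v(t))² ≤ e^{Ct} ∫₀^L (u(0) − v(0))²`. -/
theorem continuous_dependence_generalized_KdVB
    (f g : ℝ → ℝ) (hf : ContDiff ℝ 2 f) (hg : ContDiff ℝ 1 g)
    (L M : ℝ) (hL : 0 < L) (hM : 0 < M) :
    ∃ C > (0 : ℝ), ∀ T : ℝ, 0 < T → ∀ u v : ℝ → ℝ → ℝ,
      IsClassicalPeriodicSolutionOn f g L T u →
      IsClassicalPeriodicSolutionOn f g L T v →
      (∀ t ∈ Set.Icc (0:ℝ) T, ∀ x : ℝ, |u t x| ≤ M) →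
      (∀ t ∈ Set.Icc (0:ℝ) T, ∀ x : ℝ, |v t x| ≤ M) →
      (∀ t ∈ Set.Icc (0:ℝ) T, ∀ x : ℝ, |deriv (u t) x| ≤ M) →
      (∀ t ∈ Set.Icc (0:ℝ) T, ∀ x : ℝ, |deriv (v t) x| ≤ M) →
      ∀ t ∈ Set.Icc (0:ℝ) T,
        (∫ x in (0:ℝ)..L, (u t x - v t x) ^ 2) ≤
          Real.exp (C * t) * ∫ x in (0:ℝ)..L, (u 0 x - v 0 x) ^ 2 := by
  have hf' : ContDiff ℝ 1 (deriv f) := hf.deriv'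
  obtain ⟨K₁, hK₁⟩ := (isCompact_Icc (a := -M) (b := M)).exists_bound_of_continuousOn
    hf'.continuous.continuousOn
  obtain ⟨K₂, hK₂⟩ := hf'.contDiffOn.exists_lipschitzOnWith one_ne_zero (convex_Icc (-M) M)
    isCompact_Icc
  obtain ⟨K₃, hK₃⟩ := hg.contDiffOn.exists_lipschitzOnWith one_ne_zero (convex_Icc (-M) M)
    isCompact_Icc
  refine ⟨K₁ ^ 2 + 2 * K₂ * M + 2 * K₃ + 1, by positivity,
    fun T _ u v hu hv hu_le hv_le _ hvx_le t ht => ?_⟩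
  simpa only [sub_zero] using le_exp_mul_sub_mul_of_hasDerivAt_le
    (hu.continuousOn_integral_sq_sub hv) (fun τ hτ => hu.hasDerivAt_integral_sq_sub hv hτ)
    (fun τ hτ => hu.integral_two_mul_sub_mul_deriv_time_sub_le hv hL.le hK₃ hK₂
      (by simpa only [Real.norm_eq_abs] using hK₁) (le_add_of_nonneg_right zero_le_one)
      (fun x => abs_le.1 (hu_le τ (Ioo_subset_Icc_self hτ) x))
      (fun x => abs_le.1 (hv_le τ (Ioo_subset_Icc_self hτ) x))
      (hvx_le τ (Ioo_subset_Icc_self hτ)) (Ioo_subset_Ioc_self hτ)) ht
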